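/- For all natural numbers n and m, the torus board (4+2n)′×(4+2m)′ admits a fault-free domino tiling. -/

import Mathlib

/-- Adjacency on the torus board `a′ × b′`: cells `(i,j)` and `(i+1,j)` with
addition in `ZMod a` (vertical neighbors, wrapping around) or `(i,j)` and
`(i,j+1)` with addition in `ZMod b` (horizontal neighbors, wrapping around). -/
def torAdj (a b : ℕ) (c d : ZMod a × ZMod b) : Prop :=
  (c.2 = d.2 ∧ (d.1 = c.1 + 1 ∨ c.1 = d.1 + 1)) ∨
  (c.1 = d.1 ∧ (d.2 = c.2 + 1 ∨ c.2 = d.2 + 1))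

/-- A tiling of the torus board: a set of dominoes (unordered pairs of adjacent
cells) such that every cell belongs to exactly one domino. -/
def torIsTiling (a b : ℕ) (T : Set (Sym2 (ZMod a × ZMod b))) : Prop :=
  (∀ p ∈ T, ∃ c d, torAdj a b c d ∧ p = s(c, d)) ∧
  (∀ x : ZMod a × ZMod b, ∃! p, p ∈ T ∧ x ∈ p)

/-- A tiling of the torus board is fault-free if every horizontal fault-line
(between rows `i` and `i+1`, for `i : ZMod a`) and every vertical fault-line
(between columns `j` and `j+1`, for `j : ZMod b`) is crossed by some domino. -/
def torFaultFree (a b : ℕ) (T : Set (Sym2 (ZMod a × ZMod b))) : Prop :=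
  (∀ i : ZMod a, ∃ j : ZMod b, s((i, j), (i + 1, j)) ∈ T) ∧
  (∀ j : ZMod b, ∃ i : ZMod a, s((i, j), (i, j + 1)) ∈ T)

/-- The torus board `a′ × b′` admits a fault-free domino tiling. -/
def torFaultFreeTileable (a b : ℕ) : Prop :=
  ∃ T : Set (Sym2 (ZMod a × ZMod b)), torIsTiling a b T ∧ torFaultFree a b T

/-!
A tiling is encoded by a direction field: every cell points to its partner, and the partner
points back. Rows, and likewise columns, fall into five classes: the indices `0`, `1`, `2`,
then the odd and the even indices `≥ 3`. Adding `1` sends each class to a fixed next class,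
except at the last index, which is odd (the side length is even) and wraps around to class `0`.
A field that is constant on products of classes is therefore checked by a finite computation on
a `5 × 5` table of directions, and so is the existence of dominoes across all fault-lines.
-/

theorem Function.Involutive.existsUnique_mem_range_sym2 {α : Type*} {σ : α → α}
    (hσ : Function.Involutive σ) (x : α) :
    ∃! p, p ∈ Set.range (fun y => s(y, σ y)) ∧ x ∈ p := by
  refine ⟨s(x, σ x), ⟨⟨x, rfl⟩, Sym2.mem_mk_left _ _⟩, ?_⟩
  rintro _ ⟨⟨y, rfl⟩, hx⟩
  rcases Sym2.mem_iff.mp hx with rfl | rfl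
  · rfl
  · rw [hσ, Sym2.eq_swap]

namespace TorusTiling

inductive Dir
  | up | down | left | right
  deriving DecidableEq

namespace Dir

def opp : Dir → Dir
  | up => down
  | down => up
  | left => right
  | right => left

def shift (a b : ℕ) : Dir → ZMod a × ZMod b
  | up => (-1, 0)
  | down => (1, 0)
  | left => (0, -1)
  | right => (0, 1)

theorem shift_add_shift_opp (a b : ℕ) (d : Dir) : d.shift a b + d.opp.shift a b = 0 := by
  cases d <;> simp [shift, opp]

theorem torAdj_add_shift {a b : ℕ} (x : ZMod a × ZMod b) (d : Dir) :
    torAdj a b x (x + d.shift a b) := by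
  cases d <;> simp [torAdj, shift]

end Dir

section DirectionField

variable {a b : ℕ}

def IsPairing (f : ZMod a × ZMod b → Dir) : Prop :=
  ∀ x, f (x + (f x).shift a b) = (f x).opp

theorem IsPairing.involutive {f : ZMod a × ZMod b → Dir} (hf : IsPairing f) :
    Function.Involutive fun x => x + (f x).shift a b := by
  intro x
  simp only [hf x, add_assoc, Dir.shift_add_shift_opp, add_zero]

theorem IsPairing.torFaultFreeTileable {f : ZMod a × ZMod b → Dir} (hf : IsPairing f)
    (hdown : ∀ i, ∃ j, f (i, j) = .down) (hright : ∀ j, ∃ i, f (i, j) = .right) :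
    torFaultFreeTileable a b := by
  refine ⟨Set.range fun x => s(x, x + (f x).shift a b),
    ⟨?_, hf.involutive.existsUnique_mem_range_sym2⟩, fun i => ?_, fun j => ?_⟩
  · rintro _ ⟨x, rfl⟩
    exact ⟨_, _, Dir.torAdj_add_shift x (f x), rfl⟩
  · obtain ⟨j, hj⟩ := hdown i
    exact ⟨j, (i, j), by simp [hj, Dir.shift]⟩
  · obtain ⟨i, hi⟩ := hright j
    exact ⟨i, (i, j), by simp [hi, Dir.shift]⟩

end DirectionField

def indexClass (n : ℕ) : Fin 5 :=
  if h : n ≤ 3 then ⟨n, by omega⟩ else if n % 2 = 1 then 3 else 4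

def nextClass : Fin 5 → Fin 5 := ![1, 2, 3, 4, 3]

theorem indexClass_succ (n : ℕ) : indexClass (n + 1) = nextClass (indexClass n) := by
  rcases n with _ | _ | _ | _ | n
  iterate 4 rfl
  unfold indexClass
  split_ifs <;> first | omega | rfl

theorem indexClass_val_add_one {a : ℕ} (ha : Even a) (h4 : 4 ≤ a) (x : ZMod a) :
    indexClass (x + 1).val = nextClass (indexClass x.val) ∨
      (indexClass x.val = 3 ∧ indexClass (x + 1).val = 0) := by
  have : NeZero a := ⟨by omega⟩
  have hx : x + 1 = ((x.val + 1 : ℕ) : ZMod a) := by push_cast; simp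
  rw [hx, ZMod.val_natCast]
  rcases (show x.val + 1 ≤ a from ZMod.val_lt x).lt_or_eq with hlt | heq
  · exact .inl (by rw [Nat.mod_eq_of_lt hlt, indexClass_succ])
  · right
    obtain ⟨k, rfl⟩ := ha
    rw [heq, Nat.mod_self]
    refine ⟨?_, rfl⟩
    unfold indexClass
    split_ifs <;> simp [Fin.ext_iff] <;> omega

theorem indexClass_val_natCast {b : ℕ} (h4 : 4 ≤ b) (c : Fin 4) :
    indexClass ((c : ℕ) : ZMod b).val = c.castSucc := by
  rw [ZMod.val_natCast, Nat.mod_eq_of_lt (by omega), indexClass, dif_pos (by omega)]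
  rfl

/-- Found by a computer search. On the `6 × 8` torus the field reads
```
U D R L R L R L
L U D R L R L R
R L U D D D D D
D R L U U U U U
U R L D D D D D
D R L U U U U U
```
-/
def pattern : Fin 5 → Fin 5 → Dir :=
  ![![.up, .down, .right, .left, .right],
    ![.left, .up, .down, .right, .left],
    ![.right, .left, .up, .down, .down],
    ![.down, .right, .left, .up, .up],
    ![.up, .right, .left, .down, .down]]

theorem pattern_down_iff_up_next (r c : Fin 5) :
    pattern r c = .down ↔ pattern (nextClass r) c = .up := by
  revert r c
  decide

theorem pattern_right_iff_left_next (r c : Fin 5) :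
    pattern r c = .right ↔ pattern r (nextClass c) = .left := by
  revert r c
  decide

-- Classes `0` to `3` occur on every side of length `≥ 4`, class `4` only from length `6` on.
theorem exists_pattern_eq_down (r : Fin 5) : ∃ c : Fin 4, pattern r c.castSucc = .down := by
  revert r
  decide

theorem exists_pattern_eq_right (c : Fin 5) : ∃ r : Fin 4, pattern r.castSucc c = .right := by
  revert c
  decide

theorem pattern_down_iff_up_add_one {a : ℕ} (ha : Even a) (h4 : 4 ≤ a) (i : ZMod a)
    (c : Fin 5) :
    pattern (indexClass i.val) c = .down ↔ pattern (indexClass (i + 1).val) c = .up := by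
  rcases indexClass_val_add_one ha h4 i with h | ⟨h, h'⟩
  · rw [h, pattern_down_iff_up_next]
  · rw [h, h']
    revert c
    decide

theorem pattern_right_iff_left_add_one {b : ℕ} (hb : Even b) (h4 : 4 ≤ b) (r : Fin 5)
    (j : ZMod b) :
    pattern r (indexClass j.val) = .right ↔ pattern r (indexClass (j + 1).val) = .left := by
  rcases indexClass_val_add_one hb h4 j with h | ⟨h, h'⟩
  · rw [h, pattern_right_iff_left_next]
  · rw [h, h']
    revert r
    decide

def patternField (a b : ℕ) (x : ZMod a × ZMod b) : Dir :=
  pattern (indexClass x.1.val) (indexClass x.2.val)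

theorem isPairing_patternField {a b : ℕ} (ha : Even a) (h4a : 4 ≤ a) (hb : Even b)
    (h4b : 4 ≤ b) : IsPairing (patternField a b) := by
  rintro ⟨i, j⟩
  unfold patternField
  generalize hd : pattern (indexClass i.val) (indexClass j.val) = d
  cases d <;> simp only [Dir.shift, Dir.opp, Prod.mk_add_mk, add_zero]
  · exact (pattern_down_iff_up_add_one ha h4a (i + -1) _).mpr (by rwa [neg_add_cancel_right])
  · exact (pattern_down_iff_up_add_one ha h4a i _).mp hd
  · exact (pattern_right_iff_left_add_one hb h4b _ (j + -1)).mpr (by rwa [neg_add_cancel_right])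
  · exact (pattern_right_iff_left_add_one hb h4b _ j).mp hd

end TorusTiling

open TorusTiling in
theorem torFaultFreeTileable_of_even {a b : ℕ} (ha : Even a) (h4a : 4 ≤ a) (hb : Even b)
    (h4b : 4 ≤ b) : torFaultFreeTileable a b := by
  refine (isPairing_patternField ha h4a hb h4b).torFaultFreeTileable (fun i => ?_) (fun j => ?_)
  · obtain ⟨c, hc⟩ := exists_pattern_eq_down (indexClass i.val)
    exact ⟨(c : ℕ), by rwa [patternField, indexClass_val_natCast h4b]⟩
  · obtain ⟨r, hr⟩ := exists_pattern_eq_right (indexClass j.val)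
    exact ⟨(r : ℕ), by rwa [patternField, indexClass_val_natCast h4a]⟩

/-- For all natural numbers `n` and `m`, the torus board
`(4+2n)′ × (4+2m)′` admits a fault-free domino tiling. -/
theorem tor_faultFree_4'4' :
    ∀ n m : ℕ, torFaultFreeTileable (4 + 2 * n) (4 + 2 * m) := fun n m =>
  torFaultFreeTileable_of_even ⟨n + 2, by omega⟩ (by omega) ⟨m + 2, by omega⟩ (by omega)
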